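/- arXiv:1007.1189 — 2 statements merged into one kernel-verified Lean document; each statement's English description precedes it below -/
import Mathlib

section
/- For all x ∈ [0,1] and γ ∈ (0,1], it holds that 1 − x·γ/(1+γ) ≤ (1+γ)^{-x/2}. -/
/-- For all `x ∈ [0,1]` and `γ ∈ (0,1]`:
`1 − xγ/(1+γ) ≤ (1+γ)^(-x/2)`. -/
theorem stmt7 (x γ : ℝ) (hx : x ∈ Set.Icc (0:ℝ) 1) (hγ : γ ∈ Set.Ioc (0:ℝ) 1) :
    1 - x * γ / (1 + γ) ≤ (1 + γ) ^ (-(x/2)) := by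
  obtain ⟨hx0, hx1⟩ := hx
  obtain ⟨hγ0, hγ1⟩ := hγ
  have h1γ : (0:ℝ) < 1 + γ := by linarith
  -- log(1+γ) ≤ γ
  have hlog : Real.log (1 + γ) ≤ γ := by
    have := Real.log_le_sub_one_of_pos h1γ
    linarith
  -- key: 1 - xγ/(1+γ) ≤ 1 - (x/2) log(1+γ)
  have hkey : 1 - x * γ / (1 + γ) ≤ 1 - (x/2) * Real.log (1 + γ) := by
    rw [div_eq_mul_inv]
    have h1 : (x/2) * Real.log (1 + γ) ≤ (x/2) * γ := by
      apply mul_le_mul_of_nonneg_left hlog (by linarith)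
    have h2 : (x/2) * γ ≤ x * γ * (1 + γ)⁻¹ := by
      have hinv : (2:ℝ)⁻¹ ≤ (1+γ)⁻¹ := by
        apply inv_anti₀ h1γ
        linarith
      nlinarith [mul_nonneg hx0 hγ0.le]
    linarith
  refine hkey.trans ?_
  rw [Real.rpow_def_of_pos h1γ]
  have := Real.add_one_le_exp (Real.log (1 + γ) * (-(x/2)))
  calc 1 - (x/2) * Real.log (1 + γ) = Real.log (1 + γ) * (-(x/2)) + 1 := by ring
    _ ≤ Real.exp (Real.log (1 + γ) * (-(x/2))) := this
end

section
/- Let V be a finite set of nodes with |D(u)| ≥ 2/ε for every u (where D(u) denotes u's closed neighborhood), and fix a time interval I. Suppose every node v has at least ε|I| non-jammed rounds in I. Let J ⊆ I be the set of rounds in which at most one node of D(u) is non-jammed. Then |J| ≤ (1 − ε/2)|I|. -/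
/-!
In a round of `J` at most one node of `D(u)` is non-jammed, so the non-jammed rounds that the
nodes of `D(u)` spend in `J` are pairwise distinct and number at most `|J| ≤ |I|`. Each node
has at least `ε|I| - |I \ J|` of them, so `|D(u)| (ε|I| - |I \ J|) ≤ |I| ≤ |D(u)| ε|I| / 2`,
which forces `|I \ J| ≥ ε|I| / 2`.
-/

open Finset

namespace Finset

variable {ι α : Type*}

theorem sum_card_filter_le_card_of_card_filter_le_one (S : Finset ι) (J : Finset α)
    (p : ι → α → Prop) [∀ v t, Decidable (p v t)]
    (h : ∀ t ∈ J, #(S.filter (p · t)) ≤ 1) :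
    ∑ v ∈ S, #(J.filter (p v)) ≤ #J :=
  calc ∑ v ∈ S, #(J.filter (p v)) = ∑ t ∈ J, #(S.filter (p · t)) := by
        simp only [card_filter]
        exact sum_comm
    _ ≤ ∑ _t ∈ J, 1 := sum_le_sum h
    _ = #J := card_eq_sum_ones J |>.symm

theorem card_filter_le_card_filter_add_card_sdiff [DecidableEq α] (s t : Finset α) (p : α → Prop)
    [DecidablePred p] :
    #(s.filter p) ≤ #(t.filter p) + #(s \ t) :=
  calc #(s.filter p) ≤ #(s.filter p \ t.filter p) + #(t.filter p) :=
        card_le_card_sdiff_add_card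
    _ ≤ #(s \ t) + #(t.filter p) := by
        gcongr ?_ + _
        refine card_le_card fun x hx ↦ ?_
        simp only [mem_sdiff, mem_filter] at hx ⊢
        tauto
    _ = #(t.filter p) + #(s \ t) := add_comm _ _

end Finset

theorem stmt12_general {ι : Type*} (Du : Finset ι) (I : Finset ℕ)
    (nj : ι → ℕ → Bool) (ε : ℝ) (hε : 0 < ε)
    (hdense : (2 : ℝ) / ε ≤ (Du.card : ℝ))
    (hnj : ∀ v ∈ Du, ε * (I.card : ℝ) ≤ ((I.filter (fun t => nj v t)).card : ℝ)) :
    (((I.filter (fun t => (Du.filter (fun v => nj v t)).card ≤ 1)).card : ℝ))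
      ≤ (1 - ε / 2) * (I.card : ℝ) := by
  set J := I.filter (fun t => #(Du.filter (fun v => nj v t)) ≤ 1)
  have hJsub : J ⊆ I := filter_subset _ _
  have hJI : #J ≤ #I := card_le_card hJsub
  have hsumJ : ∑ v ∈ Du, #(J.filter (nj v ·)) ≤ #I :=
    (sum_card_filter_le_card_of_card_filter_le_one Du J (nj · ·) fun _ ht ↦
      (mem_filter.1 ht).2).trans hJI
  have hnjJ : ∀ v ∈ Du, ε * #I - (#I - #J) ≤ (#(J.filter (nj v ·)) : ℝ) := by
    intro v hv
    have hsplit := card_filter_le_card_filter_add_card_sdiff I J (nj v ·)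
    rw [card_sdiff_of_subset hJsub] at hsplit
    have hcast : ((#I - #J : ℕ) : ℝ) = #I - #J := Nat.cast_sub hJI
    have : (#(I.filter (nj v ·)) : ℝ) ≤ #(J.filter (nj v ·)) + (#I - #J) := by
      rw [← hcast]; exact_mod_cast hsplit
    linarith [hnj v hv]
  have hcount : #Du * (ε * #I - (#I - #J)) ≤ (#I : ℝ) := by
    have := sum_le_sum hnjJ
    rw [sum_const, nsmul_eq_mul] at this
    exact this.trans (mod_cast hsumJ)
  have hεn : 2 ≤ ε * #Du := by rwa [div_le_iff₀ hε, mul_comm] at hdense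
  have hn : (0 : ℝ) < #Du := lt_of_lt_of_le (by positivity) hdense
  have hI : (#I : ℝ) ≤ #Du * (ε / 2 * #I) := by nlinarith [Nat.cast_nonneg (α := ℝ) #I]
  have hgap : ε / 2 * #I ≤ (#I - #J : ℝ) :=
    le_of_mul_le_mul_left (by linarith) hn
  linarith

/-- If `D(u)` contains at least `2/ε` nodes, each with at least `ε|I|`
non-jammed rounds in the interval `I`, then the set `J` of rounds of `I` in
which at most one node of `D(u)` is non-jammed satisfies
`|J| ≤ (1 − ε/2)|I|`. -/
theorem stmt12 {ι : Type*} [DecidableEq ι] (Du : Finset ι) (I : Finset ℕ)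
    (nj : ι → ℕ → Bool) (ε : ℝ) (hε : 0 < ε) (hε1 : ε ≤ 1)
    (hdense : (2 : ℝ) / ε ≤ (Du.card : ℝ))
    (hnj : ∀ v ∈ Du, ε * (I.card : ℝ) ≤ ((I.filter (fun t => nj v t)).card : ℝ)) :
    (((I.filter (fun t => (Du.filter (fun v => nj v t)).card ≤ 1)).card : ℝ))
      ≤ (1 - ε / 2) * (I.card : ℝ) :=
  stmt12_general Du I nj ε hε hdense hnj
end
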